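/- arXiv:1902.08343 — 2 statements merged into one kernel-verified Lean document; each statement's English description precedes it below -/
import Mathlib

section
/- Let A be an a×a positive definite Hermitian matrix and B an a×b matrix (a > b) with B^H B = I_b. Let μ_1 ≥ … ≥ μ_b be the eigenvalues of (B^H A B)⁻¹ and λ_1 ≥ … ≥ λ_b those of B^H A⁻¹ B. Then μ_k ≤ λ_k for all k = 1,…,b. -/
/-!
Conjugating the positive semidefinite block matrix `[[A, 1], [1, A⁻¹]]` by `diag(B, B)` gives
`[[Bᴴ A B, 1], [1, Bᴴ A⁻¹ B]]`, again positive semidefinite; its Schur complement shows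
`(Bᴴ A B)⁻¹ ≤ Bᴴ A⁻¹ B` in the Loewner order. Sorted eigenvalues are monotone for that order
(Courant–Fischer): if `P ≤ Q`, the span of the top `k + 1` eigenvectors of `P` meets the span of
the bottom `n - k` eigenvectors of `Q` in some `x ≠ 0`, and there
`μₖ ‖x‖² ≤ re ⟪P x, x⟫ ≤ re ⟪Q x, x⟫ ≤ λₖ ‖x‖²`.
-/

open Matrix ComplexOrder Module Submodule RCLike
open scoped InnerProductSpace MatrixOrder

theorem Submodule.inf_ne_bot_of_finrank_lt_add {K V : Type*} [DivisionRing K] [AddCommGroup V]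
    [Module K V] [FiniteDimensional K V] {U W : Submodule K V}
    (h : finrank K V < finrank K U + finrank K W) : U ⊓ W ≠ ⊥ := by
  intro hUW
  have := Submodule.finrank_sup_add_finrank_inf_eq U W
  rw [hUW, finrank_bot] at this
  have := (U ⊔ W).finrank_le
  omega

namespace OrthonormalBasis

variable {𝕜 E ι : Type*} [RCLike 𝕜] [NormedAddCommGroup E] [InnerProductSpace 𝕜 E] [Fintype ι]

theorem repr_eq_zero_of_mem_span_image (v : OrthonormalBasis ι 𝕜 E) {s : Set ι} {x : E}
    (hx : x ∈ span 𝕜 (v '' s)) {i : ι} (hi : i ∉ s) : v.repr x i = 0 := by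
  rw [← v.coe_toBasis, Basis.mem_span_image] at hx
  simpa [v.coe_toBasis_repr_apply] using fun h ↦ hi (hx h)

theorem finrank_span_image (v : OrthonormalBasis ι 𝕜 E) (s : Finset ι) :
    finrank 𝕜 (span 𝕜 (v '' s)) = s.card := by
  have := finrank_span_eq_card
    (v.orthonormal.comp ((↑) : s → ι) Subtype.val_injective).linearIndependent
  rwa [Set.range_comp, Subtype.range_coe_subtype, Finset.setOfPred_mem,
    Fintype.card_coe] at this

end OrthonormalBasis

namespace LinearMap.IsSymmetric

variable {𝕜 E : Type*} [RCLike 𝕜] [NormedAddCommGroup E] [InnerProductSpace 𝕜 E]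
  [FiniteDimensional 𝕜 E] {n : ℕ} (hn : finrank 𝕜 E = n) {S T : E →ₗ[𝕜] E}

theorem re_inner_apply_self_eq_sum (hT : T.IsSymmetric) (x : E) :
    re ⟪T x, x⟫_𝕜 = ∑ i, hT.eigenvalues hn i * ‖(hT.eigenvectorBasis hn).repr x i‖ ^ 2 := by
  rw [← (hT.eigenvectorBasis hn).repr.inner_map_map, PiLp.inner_apply, map_sum]
  refine Finset.sum_congr rfl fun i _ ↦ ?_
  simp [eigenvectorBasis_apply_self_apply, inner_apply, RCLike.norm_sq_eq_def]
  ring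

theorem le_re_inner_of_mem_span (hT : T.IsSymmetric) {s : Set (Fin n)} {c : ℝ}
    (hc : ∀ i ∈ s, c ≤ hT.eigenvalues hn i) {x : E}
    (hx : x ∈ span 𝕜 (hT.eigenvectorBasis hn '' s)) : c * ‖x‖ ^ 2 ≤ re ⟪T x, x⟫_𝕜 := by
  rw [re_inner_apply_self_eq_sum, ← (hT.eigenvectorBasis hn).repr.norm_map,
    EuclideanSpace.norm_sq_eq, Finset.mul_sum]
  refine Finset.sum_le_sum fun i _ ↦ ?_
  by_cases hi : i ∈ s
  · exact mul_le_mul_of_nonneg_right (hc i hi) (sq_nonneg _)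
  · simp [(hT.eigenvectorBasis hn).repr_eq_zero_of_mem_span_image hx hi]

theorem re_inner_le_of_mem_span (hT : T.IsSymmetric) {s : Set (Fin n)} {c : ℝ}
    (hc : ∀ i ∈ s, hT.eigenvalues hn i ≤ c) {x : E}
    (hx : x ∈ span 𝕜 (hT.eigenvectorBasis hn '' s)) : re ⟪T x, x⟫_𝕜 ≤ c * ‖x‖ ^ 2 := by
  rw [re_inner_apply_self_eq_sum, ← (hT.eigenvectorBasis hn).repr.norm_map,
    EuclideanSpace.norm_sq_eq, Finset.mul_sum]
  refine Finset.sum_le_sum fun i _ ↦ ?_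
  by_cases hi : i ∈ s
  · exact mul_le_mul_of_nonneg_right (hc i hi) (sq_nonneg _)
  · simp [(hT.eigenvectorBasis hn).repr_eq_zero_of_mem_span_image hx hi]

theorem eigenvalues_le_of_le (hS : S.IsSymmetric) (hT : T.IsSymmetric) (hST : S ≤ T)
    (k : Fin n) : hS.eigenvalues hn k ≤ hT.eigenvalues hn k := by
  set U := span 𝕜 (hS.eigenvectorBasis hn '' ↑(Finset.Iic k))
  set W := span 𝕜 (hT.eigenvectorBasis hn '' ↑(Finset.Ici k))
  have hdim : finrank 𝕜 E < finrank 𝕜 U + finrank 𝕜 W := by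
    rw [OrthonormalBasis.finrank_span_image, OrthonormalBasis.finrank_span_image, Fin.card_Iic,
      Fin.card_Ici]
    omega
  obtain ⟨x, ⟨hxU, hxW⟩, hx⟩ :=
    Submodule.exists_mem_ne_zero_of_ne_bot (Submodule.inf_ne_bot_of_finrank_lt_add hdim)
  have hbound : hS.eigenvalues hn k * ‖x‖ ^ 2 ≤ hT.eigenvalues hn k * ‖x‖ ^ 2 :=
    calc hS.eigenvalues hn k * ‖x‖ ^ 2
        ≤ re ⟪S x, x⟫_𝕜 := hS.le_re_inner_of_mem_span hn
          (fun i hi ↦ hS.eigenvalues_antitone hn (Finset.mem_Iic.mp hi)) hxU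
      _ ≤ re ⟪T x, x⟫_𝕜 := by
          simpa [inner_sub_left] using hST.re_inner_nonneg_left x
      _ ≤ hT.eigenvalues hn k * ‖x‖ ^ 2 := hT.re_inner_le_of_mem_span hn
          (fun i hi ↦ hT.eigenvalues_antitone hn (Finset.mem_Ici.mp hi)) hxW
  exact le_of_mul_le_mul_right hbound (by positivity)

end LinearMap.IsSymmetric

namespace Matrix

variable {𝕜 : Type*} [RCLike 𝕜] {m n : Type*} [Fintype m] [DecidableEq m] [Fintype n]
  [DecidableEq n]

theorem PosDef.posSemidef_fromBlocks_one_inv {A : Matrix m m 𝕜} (hA : A.PosDef) :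
    (fromBlocks A 1 1 A⁻¹).PosSemidef := by
  have := hA.isUnit.invertible
  simpa using (PosDef.fromBlocks₁₁ (1 : Matrix m m 𝕜) A⁻¹ hA).mpr (by simpa using PosSemidef.zero)

theorem PosDef.inv_conjTranspose_mul_mul_le {A : Matrix m m 𝕜} (hA : A.PosDef)
    {B : Matrix m n 𝕜} (hB : Bᴴ * B = 1) : (Bᴴ * A * B)⁻¹ ≤ Bᴴ * A⁻¹ * B := by
  have hBinj : Function.Injective B.mulVec :=
    fun x y hxy ↦ by simpa [hB] using congrArg (Bᴴ *ᵥ ·) hxy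
  have hM := hA.conjTranspose_mul_mul_same hBinj
  have := hM.isUnit.invertible
  have hblock : fromBlocks (Bᴴ * A * B) 1 1 (Bᴴ * A⁻¹ * B)
      = (fromBlocks B 0 0 B)ᴴ * fromBlocks A 1 1 A⁻¹ * fromBlocks B 0 0 B := by
    simp [fromBlocks_conjTranspose, fromBlocks_multiply, hB]
  have hpsd := (PosDef.fromBlocks₁₁ (1 : Matrix n n 𝕜) (Bᴴ * A⁻¹ * B) hM).mp
  rw [conjTranspose_one, hblock] at hpsd
  simpa [le_iff] using hpsd (hA.posSemidef_fromBlocks_one_inv.conjTranspose_mul_mul_same _)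

end Matrix

namespace Matrix.IsHermitian

variable {𝕜 : Type*} [RCLike 𝕜] {n : ℕ}

/-- `hP.eigenvalues` is the sorted `hP.eigenvalues₀` reindexed along an arbitrary equivalence,
hence itself unsorted; its antitone rearrangements are all `hP.eigenvalues₀`. -/
theorem eq_eigenvalues₀_of_antitone {P : Matrix (Fin n) (Fin n) 𝕜} (hP : P.IsHermitian)
    {μ : Fin n → ℝ} (hμ : Antitone μ) (hμP : ∃ σ : Equiv.Perm (Fin n), μ = hP.eigenvalues ∘ σ) :
    μ = hP.eigenvalues₀ ∘ finCongr (Fintype.card_fin n).symm := by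
  obtain ⟨σ, rfl⟩ := hμP
  set c := finCongr (Fintype.card_fin n).symm
  set e : Fin (Fintype.card (Fin n)) ≃ Fin n := Fintype.equivOfCardEq (Fintype.card_fin _)
  have hsorted : Antitone (hP.eigenvalues₀ ∘ c) :=
    hP.eigenvalues₀_antitone.comp_monotone fun _ _ h ↦ h
  have hperm : hP.eigenvalues ∘ σ = (hP.eigenvalues₀ ∘ c) ∘ σ.trans (e.symm.trans c.symm) := by
    ext i
    simp [eigenvalues, e]
  rw [hperm] at hμ ⊢
  simpa using Tuple.unique_antitone (τ := 1) hμ hsorted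

theorem eigenvalues_le_of_le {P Q : Matrix (Fin n) (Fin n) 𝕜} (hP : P.IsHermitian)
    (hQ : Q.IsHermitian) (hPQ : P ≤ Q) {μ lam : Fin n → ℝ} (hμ : Antitone μ) (hlam : Antitone lam)
    (hμP : ∃ σ : Equiv.Perm (Fin n), μ = hP.eigenvalues ∘ σ)
    (hlamQ : ∃ σ : Equiv.Perm (Fin n), lam = hQ.eigenvalues ∘ σ) (k : Fin n) : μ k ≤ lam k := by
  rw [hP.eq_eigenvalues₀_of_antitone hμ hμP, hQ.eq_eigenvalues₀_of_antitone hlam hlamQ]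
  refine LinearMap.IsSymmetric.eigenvalues_le_of_le _ _ _ ?_ _
  rw [LinearMap.le_def, ← map_sub, isPositive_toEuclideanLin_iff]
  exact le_iff.mp hPQ

end Matrix.IsHermitian

theorem stmt4_general {a b : ℕ} (A : Matrix (Fin a) (Fin a) ℂ) (hA : A.PosDef)
    (B : Matrix (Fin a) (Fin b) ℂ) (hB : Bᴴ * B = 1)
    (h1 : ((Bᴴ * A * B)⁻¹).IsHermitian) (h2 : (Bᴴ * A⁻¹ * B).IsHermitian)
    (μ lam : Fin b → ℝ) (hμa : Antitone μ) (hla : Antitone lam)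
    (hμ : ∃ σ : Equiv.Perm (Fin b), μ = h1.eigenvalues ∘ σ)
    (hl : ∃ σ : Equiv.Perm (Fin b), lam = h2.eigenvalues ∘ σ) :
    ∀ k, μ k ≤ lam k :=
  h1.eigenvalues_le_of_le h2 (hA.inv_conjTranspose_mul_mul_le hB) hμa hla hμ hl

theorem stmt4 {a b : ℕ} (hab : b < a) (A : Matrix (Fin a) (Fin a) ℂ) (hA : A.PosDef)
    (B : Matrix (Fin a) (Fin b) ℂ) (hB : Bᴴ * B = 1)
    (h1 : ((Bᴴ * A * B)⁻¹).IsHermitian) (h2 : (Bᴴ * A⁻¹ * B).IsHermitian)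
    (μ lam : Fin b → ℝ) (hμa : Antitone μ) (hla : Antitone lam)
    (hμ : ∃ σ : Equiv.Perm (Fin b), μ = h1.eigenvalues ∘ σ)
    (hl : ∃ σ : Equiv.Perm (Fin b), lam = h2.eigenvalues ∘ σ) :
    ∀ k, μ k ≤ lam k :=
  stmt4_general A hA B hB h1 h2 μ lam hμa hla hμ hl
end

section
/- Let A be an n×n Hermitian positive semidefinite matrix and P an n×n orthogonal projection matrix (P = P^H = P²). Then I + P A P is positive definite, and tr((I + P A P)⁻¹) ≥ tr((I + A)⁻¹). -/
/-!
Write `A = Bᴴ B`. The trace of `(1 + X Y)⁻¹` does not change when `X` and `Y` are swapped, so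
`tr (1 + A)⁻¹ = tr (1 + B Bᴴ)⁻¹` and `tr (1 + P A P)⁻¹ = tr (1 + (B P)ᴴ (B P))⁻¹ = tr (1 + B P Bᴴ)⁻¹`.
Since `P ≤ 1`, we have `B P Bᴴ ≤ B Bᴴ` in the Loewner order, and inversion reverses that order on
positive definite matrices.
-/

open Matrix ComplexOrder

namespace Matrix

variable {n R : Type*} [Fintype n] [DecidableEq n] [CommRing R]

theorem isUnit_det_one_add_mul_comm {X Y : Matrix n n R} :
    IsUnit (1 + X * Y).det ↔ IsUnit (1 + Y * X).det := by
  rw [det_one_add_mul_comm]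

theorem mul_inv_one_add_mul_comm (X Y : Matrix n n R) :
    Y * (1 + X * Y)⁻¹ = (1 + Y * X)⁻¹ * Y := by
  by_cases h : IsUnit (1 + X * Y).det
  · have h' := isUnit_det_one_add_mul_comm.mp h
    calc Y * (1 + X * Y)⁻¹ = (1 + Y * X)⁻¹ * ((1 + Y * X) * Y) * (1 + X * Y)⁻¹ := by
          rw [← mul_assoc, nonsing_inv_mul _ h', one_mul]
      _ = (1 + Y * X)⁻¹ * Y * ((1 + X * Y) * (1 + X * Y)⁻¹) := by
          simp only [mul_assoc, add_mul, mul_add, one_mul]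
      _ = (1 + Y * X)⁻¹ * Y := by rw [mul_nonsing_inv _ h, mul_one]
  · rw [nonsing_inv_apply_not_isUnit _ h,
      nonsing_inv_apply_not_isUnit _ (isUnit_det_one_add_mul_comm.not.mp h), mul_zero, zero_mul]

theorem inv_one_add_eq_one_sub_inv_mul {Z : Matrix n n R} (hZ : IsUnit (1 + Z).det) :
    (1 + Z)⁻¹ = 1 - (1 + Z)⁻¹ * Z := by
  rw [eq_sub_iff_add_eq, ← mul_one_add, nonsing_inv_mul _ hZ]

theorem trace_inv_one_add_mul_comm (X Y : Matrix n n R) :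
    ((1 + X * Y)⁻¹).trace = ((1 + Y * X)⁻¹).trace := by
  by_cases h : IsUnit (1 + X * Y).det
  · rw [inv_one_add_eq_one_sub_inv_mul h,
      inv_one_add_eq_one_sub_inv_mul (isUnit_det_one_add_mul_comm.mp h), trace_sub, trace_sub,
      ← mul_assoc, trace_mul_cycle, mul_inv_one_add_mul_comm, mul_assoc]
  -- Neither side is invertible, and `⁻¹` then returns `0` on both sides.
  · rw [nonsing_inv_apply_not_isUnit _ h,
      nonsing_inv_apply_not_isUnit _ (isUnit_det_one_add_mul_comm.not.mp h)]

section LoewnerOrder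

open scoped MatrixOrder

open scoped Matrix.Norms.L2Operator in
theorem PosDef.inv_le_inv {M N : Matrix n n ℂ} (hM : M.PosDef) (hMN : M ≤ N) : N⁻¹ ≤ M⁻¹ := by
  have hN : N.PosDef := by simpa using hM.add_posSemidef hMN
  simpa [coe_units_inv] using
    CStarAlgebra.inv_le_inv (a := hM.isUnit.unit) (b := hN.isUnit.unit) hM.posSemidef.nonneg hMN

theorem trace_inv_one_add_le_trace_inv_one_add_conj {A P : Matrix n n ℂ} (hA : A.PosSemidef)
    (hP : IsStarProjection P) : ((1 + A)⁻¹).trace ≤ ((1 + P * A * P)⁻¹).trace := by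
  obtain ⟨B, rfl⟩ := CStarAlgebra.nonneg_iff_eq_star_mul_self.mp hA.nonneg
  have hBPB : (1 + B * P * star B).PosDef :=
    PosDef.one.add_posSemidef (star_right_conjugate_nonneg hP.nonneg B).posSemidef
  have hle : 1 + B * P * star B ≤ 1 + B * star B := by
    simpa using add_le_add_left (star_right_conjugate_le_conjugate hP.le_one B) 1
  calc ((1 + star B * B)⁻¹).trace = ((1 + B * star B)⁻¹).trace := trace_inv_one_add_mul_comm _ _
    _ ≤ ((1 + B * P * star B)⁻¹).trace :=
        OrderHomClass.mono (tracePositiveLinearMap n ℂ ℂ) (hBPB.inv_le_inv hle)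
    _ = ((1 + P * star B * (B * P))⁻¹).trace := by
        rw [← trace_inv_one_add_mul_comm (B * P), ← mul_assoc (B * P), mul_assoc B P P,
          hP.isIdempotentElem.eq]
    _ = ((1 + P * (star B * B) * P)⁻¹).trace := by simp only [mul_assoc]

end LoewnerOrder

end Matrix

theorem stmt18 {n : ℕ} (A P : Matrix (Fin n) (Fin n) ℂ) (hA : A.PosSemidef)
    (hP1 : Pᴴ = P) (hP2 : P * P = P) :
    (1 + P * A * P).PosDef ∧
      (((1 + A)⁻¹).trace).re ≤ (((1 + P * A * P)⁻¹).trace).re := by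
  have hP : IsStarProjection P := ⟨hP2, hP1⟩
  have hPAP : (P * A * P).PosSemidef := by simpa [hP1] using hA.conjTranspose_mul_mul_same P
  exact ⟨PosDef.one.add_posSemidef hPAP,
    Complex.re_le_re (trace_inv_one_add_le_trace_inv_one_add_conj hA hP)⟩
end
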